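/- Let 𝔪 = (Δ₁, …, Δ_N) be a ladder multisegment in aligned form (strictly decreasing left and right endpoints), let Δ = Δ₁ be its largest segment, and let 𝔫 be any multisegment with every segment of 𝔫 ending weakly below the end of Δ (i.e., e(Δ') ≤ e(Δ) for all Δ' ∈ 𝔫). Write 𝔫_{<} for the sub-multisegment of segments Δ' in 𝔫 with (e(Δ'), b(Δ')) lexicographically smaller than (e(Δ), b(Δ)) (i.e., Δ' <_e Δ). Then the condition LC(𝔪, 𝔫) holds if and only if LC(𝔪 − Δ, 𝔫_{<}) holds, where LC(𝔪, 𝔫) means: with X = {(i,j) : Δ_i ≺ Δ'_j}, Y = {(i,j) : (Δ_i − 1) ≺ Δ'_j} and relation (i₂,j₂) ↝ (i₁,j₁) iff (i₁ = i₂ and Δ'_{j₂} ≺ Δ'_{j₁}) or (j₁ = j₂ and Δ_{i₁} ≺ Δ_{i₂}), there exists an injective f : X → Y with f(x) ↝ x for all x. -/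
import Mathlib


/-- A segment `[a, b]` of integers (meaningful when `a ≤ b`). -/
structure Seg where
  a : ℤ
  b : ℤ
deriving DecidableEq

/-- `Δ` is a genuine segment, i.e. `a ≤ b`. -/
def Seg.IsSeg (Δ : Seg) : Prop := Δ.a ≤ Δ.b

/-- Containment of segments `Δ ⊆ Δ'`. -/
def Seg.Sub (Δ Δ' : Seg) : Prop := Δ'.a ≤ Δ.a ∧ Δ.b ≤ Δ'.b

/-- `Δ` and `Δ'` are linked: their union is again a segment (interval) but neither is
contained in the other. -/
def Seg.Linked (Δ Δ' : Seg) : Prop :=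
  max Δ.a Δ'.a ≤ min Δ.b Δ'.b + 1 ∧ ¬ Δ.Sub Δ' ∧ ¬ Δ'.Sub Δ

/-- `Δ` precedes `Δ'` (`Δ ≺ Δ'`): they are linked and `Δ` starts strictly earlier. -/
def Seg.Prec (Δ Δ' : Seg) : Prop := Δ.Linked Δ' ∧ Δ.a < Δ'.a

/-- The shifted segment `Δ - 1 = [a-1, b-1]`. -/
def Seg.shift (Δ : Seg) : Seg := ⟨Δ.a - 1, Δ.b - 1⟩

/-- There exists a matching function from `X` into `Y` for the relation `R`
(read `R q p` as `q ↝ p`): an injective `f : X → Y` with `f p ↝ p` for all `p ∈ X`. -/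
def ExistsMatching {ι : Type*} (X Y : Set ι) (R : ι → ι → Prop) : Prop :=
  ∃ f : X → Y, Function.Injective f ∧ ∀ p : X, R (f p : ι) (p : ι)

/-- Recursive step for `LC` of a ladder: if `𝔪 = (Δ₀, …, Δ_{N-1})` is a ladder in aligned
form with largest segment `Δ = Δ₀` and every segment of `𝔫` ends weakly below `e(Δ)`,
then `LC(𝔪, 𝔫)` holds iff `LC(𝔪 − Δ, 𝔫_{<ₑΔ})` holds, where `𝔫_{<ₑΔ}` consists of the
segments of `𝔫` lexicographically `<ₑ` smaller than `Δ` and `𝔪 − Δ = (Δ₁, …, Δ_{N-1})`. -/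
theorem ladder_LC_step (N N' : ℤ) (hN : 0 < N) (m n : ℤ → Seg)
    (hm : ∀ i, 0 ≤ i → i < N → (m i).IsSeg)
    (hn : ∀ j, 0 ≤ j → j < N' → (n j).IsSeg)
    (hladder : ∀ i j, 0 ≤ i → i < j → j < N → (m j).a < (m i).a ∧ (m j).b < (m i).b)
    (hend : ∀ j, 0 ≤ j → j < N' → (n j).b ≤ (m 0).b) :
    ExistsMatching
        {p : ℤ × ℤ | 0 ≤ p.1 ∧ p.1 < N ∧ 0 ≤ p.2 ∧ p.2 < N' ∧ (m p.1).Prec (n p.2)}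
        {p : ℤ × ℤ | 0 ≤ p.1 ∧ p.1 < N ∧ 0 ≤ p.2 ∧ p.2 < N' ∧ (m p.1).shift.Prec (n p.2)}
        (fun q p => (p.1 = q.1 ∧ (n q.2).Prec (n p.2)) ∨ (p.2 = q.2 ∧ (m p.1).Prec (m q.1))) ↔
      ExistsMatching
        {p : ℤ × ℤ | 1 ≤ p.1 ∧ p.1 < N ∧ 0 ≤ p.2 ∧ p.2 < N' ∧
          ((n p.2).b < (m 0).b ∨ ((n p.2).b = (m 0).b ∧ (n p.2).a < (m 0).a)) ∧
          (m p.1).Prec (n p.2)}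
        {p : ℤ × ℤ | 1 ≤ p.1 ∧ p.1 < N ∧ 0 ≤ p.2 ∧ p.2 < N' ∧
          ((n p.2).b < (m 0).b ∨ ((n p.2).b = (m 0).b ∧ (n p.2).a < (m 0).a)) ∧
          (m p.1).shift.Prec (n p.2)}
        (fun q p => (p.1 = q.1 ∧ (n q.2).Prec (n p.2)) ∨ (p.2 = q.2 ∧ (m p.1).Prec (m q.1))) := by
  
  classical
  simp only [ExistsMatching]
  set X : Set (ℤ × ℤ) := {p : ℤ × ℤ | 0 ≤ p.1 ∧ p.1 < N ∧ 0 ≤ p.2 ∧ p.2 < N' ∧ (m p.1).Prec (n p.2)} with hXdef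
  set Y : Set (ℤ × ℤ) := {p : ℤ × ℤ | 0 ≤ p.1 ∧ p.1 < N ∧ 0 ≤ p.2 ∧ p.2 < N' ∧ (m p.1).shift.Prec (n p.2)} with hYdef
  set A : Set (ℤ × ℤ) := {p : ℤ × ℤ | 1 ≤ p.1 ∧ p.1 < N ∧ 0 ≤ p.2 ∧ p.2 < N' ∧
      ((n p.2).b < (m 0).b ∨ ((n p.2).b = (m 0).b ∧ (n p.2).a < (m 0).a)) ∧
      (m p.1).Prec (n p.2)} with hAdef
  set B : Set (ℤ × ℤ) := {p : ℤ × ℤ | 1 ≤ p.1 ∧ p.1 < N ∧ 0 ≤ p.2 ∧ p.2 < N' ∧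
      ((n p.2).b < (m 0).b ∨ ((n p.2).b = (m 0).b ∧ (n p.2).a < (m 0).a)) ∧
      (m p.1).shift.Prec (n p.2)} with hBdef
  have memX : ∀ p : ℤ × ℤ, p ∈ X ↔
      (0 ≤ p.1 ∧ p.1 < N ∧ 0 ≤ p.2 ∧ p.2 < N' ∧ (m p.1).Prec (n p.2)) := fun _ => Iff.rfl
  have memY : ∀ p : ℤ × ℤ, p ∈ Y ↔
      (0 ≤ p.1 ∧ p.1 < N ∧ 0 ≤ p.2 ∧ p.2 < N' ∧ (m p.1).shift.Prec (n p.2)) := fun _ => Iff.rfl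
  have memA : ∀ p : ℤ × ℤ, p ∈ A ↔
      (1 ≤ p.1 ∧ p.1 < N ∧ 0 ≤ p.2 ∧ p.2 < N' ∧
        ((n p.2).b < (m 0).b ∨ ((n p.2).b = (m 0).b ∧ (n p.2).a < (m 0).a)) ∧
        (m p.1).Prec (n p.2)) := fun _ => Iff.rfl
  have memB : ∀ p : ℤ × ℤ, p ∈ B ↔
      (1 ≤ p.1 ∧ p.1 < N ∧ 0 ≤ p.2 ∧ p.2 < N' ∧
        ((n p.2).b < (m 0).b ∨ ((n p.2).b = (m 0).b ∧ (n p.2).a < (m 0).a)) ∧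
        (m p.1).shift.Prec (n p.2)) := fun _ => Iff.rfl
  have hm0 : (m 0).IsSeg := hm 0 le_rfl hN
  -- the first segment never precedes a segment of 𝔫
  have hX0 : ∀ j : ℤ, 0 ≤ j → j < N' → ¬ (m 0).Prec (n j) := by
    intro j h1 h2 hp
    have he := hend j h1 h2
    simp only [Seg.Prec, Seg.Linked, Seg.Sub] at hp
    omega
  -- if (m 0).shift precedes (n j) then n j is not <ₑ-smaller than m 0
  have hY0 : ∀ j : ℤ, 0 ≤ j → j < N' → (m 0).shift.Prec (n j) →
      (n j).b = (m 0).b ∧ (m 0).a ≤ (n j).a := by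
    intro j h1 h2 hp
    have he := hend j h1 h2
    simp only [Seg.Prec, Seg.Linked, Seg.Sub, Seg.shift] at hp
    omega
  -- Prec decreases right endpoints
  have hPrecb : ∀ j j' : ℤ, (n j').Prec (n j) → (n j').b < (n j).b := by
    intro j j' hp
    simp only [Seg.Prec, Seg.Linked, Seg.Sub] at hp
    omega
  -- elements of X have positive first coordinate
  have hXpos : ∀ p : ℤ × ℤ, p ∈ X → 1 ≤ p.1 := by
    intro p hp
    obtain ⟨h1, h2, h3, h4, h5⟩ := (memX p).mp hp
    rcases eq_or_lt_of_le h1 with h0 | h0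
    · exact absurd (by rw [← h0] at h5; exact h5) (hX0 p.2 h3 h4)
    · omega
  -- key numeric facts for elements of X whose n-part is not <ₑ-smaller than m 0
  have key : ∀ p : ℤ × ℤ, p ∈ X →
      ¬((n p.2).b < (m 0).b ∨ ((n p.2).b = (m 0).b ∧ (n p.2).a < (m 0).a)) →
      1 ≤ p.1 ∧ (n p.2).b = (m 0).b ∧ (m 0).a ≤ (n p.2).a ∧
        (m p.1).a < (n p.2).a ∧ (n p.2).a ≤ (m p.1).b + 1 := by
    intro p hp hns
    obtain ⟨h1, h2, h3, h4, h5⟩ := (memX p).mp hp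
    have hp1 := hXpos p hp
    have hl := hladder 0 p.1 le_rfl (by omega) h2
    have he := hend p.2 h3 h4
    simp only [Seg.Prec, Seg.Linked, Seg.Sub] at h5
    refine ⟨hp1, by omega, by omega, by omega, by omega⟩
  constructor
  · -- forward direction: restrict the matching
    rintro ⟨f, hinj, hf⟩
    have incl : ∀ p : ℤ × ℤ, p ∈ A → p ∈ X := by
      intro p hp
      obtain ⟨h1, h2, h3, h4, h5, h6⟩ := (memA p).mp hp
      exact (memX p).mpr ⟨by omega, h2, h3, h4, h6⟩
    have himg : ∀ (p : ℤ × ℤ) (hp : p ∈ A), (↑(f ⟨p, incl p hp⟩) : ℤ × ℤ) ∈ B := by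
      intro p hp
      obtain ⟨h1, h2, h3, h4, h5, h6⟩ := (memA p).mp hp
      have hq := (memY _).mp ((f ⟨p, incl p hp⟩).2)
      have hr : ((p.1 = (↑(f ⟨p, incl p hp⟩) : ℤ × ℤ).1 ∧ (n (↑(f ⟨p, incl p hp⟩) : ℤ × ℤ).2).Prec (n p.2)) ∨
          (p.2 = (↑(f ⟨p, incl p hp⟩) : ℤ × ℤ).2 ∧ (m p.1).Prec (m (↑(f ⟨p, incl p hp⟩) : ℤ × ℤ).1))) := hf ⟨p, incl p hp⟩
      obtain ⟨g1, g2, g3, g4, g5⟩ := hq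
      rw [memB]
      rcases hr with ⟨hj, hprec⟩ | ⟨hi, hprec⟩
      · have hb := hPrecb _ _ hprec
        exact ⟨by omega, g2, g3, g4, by omega, g5⟩
      · have hq1 : 1 ≤ (↑(f ⟨p, incl p hp⟩) : ℤ × ℤ).1 := by
          rcases eq_or_lt_of_le g1 with h0 | h0
          · exfalso
            have hc := hY0 _ g3 g4 (by rw [← h0] at g5; exact g5)
            rw [hi] at h5
            omega
          · omega
        exact ⟨hq1, g2, g3, g4, by rw [hi] at h5; exact h5, g5⟩
    refine ⟨fun p => ⟨(↑(f ⟨↑p, incl ↑p p.2⟩) : ℤ × ℤ), himg ↑p p.2⟩, ?_, ?_⟩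
    · intro p p' hpp
      have h1 := Subtype.ext_iff.mp hpp
      have h3 := hinj (Subtype.ext h1)
      have h4 := Subtype.ext_iff.mp h3
      exact Subtype.ext h4
    · intro p
      exact hf ⟨↑p, incl ↑p p.2⟩
  · -- backward direction: extend the matching
    rintro ⟨f, hinj, hf⟩
    have inclB : ∀ q : ℤ × ℤ, q ∈ B → q ∈ Y := by
      intro q hq
      obtain ⟨h1, h2, h3, h4, h5, h6⟩ := (memB q).mp hq
      exact (memY q).mpr ⟨by omega, h2, h3, h4, h6⟩
    have memA' : ∀ p : ℤ × ℤ, p ∈ X →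
        ((n p.2).b < (m 0).b ∨ ((n p.2).b = (m 0).b ∧ (n p.2).a < (m 0).a)) → p ∈ A := by
      intro p hp hs
      obtain ⟨h1, h2, h3, h4, h5⟩ := (memX p).mp hp
      exact (memA p).mpr ⟨hXpos p hp, h2, h3, h4, hs, h5⟩
    have memY1 : ∀ p : ℤ × ℤ, p ∈ X →
        ¬((n p.2).b < (m 0).b ∨ ((n p.2).b = (m 0).b ∧ (n p.2).a < (m 0).a)) →
        2 ≤ p.1 → (m (p.1 - 1)).a < (n p.2).a → (p.1 - 1, p.2) ∈ Y := by
      intro p hp hns h2' ha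
      obtain ⟨h1, h2, h3, h4, h5⟩ := (memX p).mp hp
      obtain ⟨k1, k2, k3, k4, k5⟩ := key p hp hns
      have hl1 := hladder (p.1 - 1) p.1 (by omega) (by omega) h2
      have hl0 := hladder 0 (p.1 - 1) le_rfl (by omega) (by omega)
      have hsn := hn p.2 h3 h4
      refine (memY _).mpr ⟨by omega, by omega, h3, h4, ?_⟩
      simp only [Seg.IsSeg] at hsn
      simp only [Seg.Prec, Seg.Linked, Seg.Sub, Seg.shift]
      omega
    have memY0 : ∀ p : ℤ × ℤ, p ∈ X →
        ¬((n p.2).b < (m 0).b ∨ ((n p.2).b = (m 0).b ∧ (n p.2).a < (m 0).a)) →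
        ((0 : ℤ), p.2) ∈ Y := by
      intro p hp hns
      obtain ⟨h1, h2, h3, h4, h5⟩ := (memX p).mp hp
      obtain ⟨k1, k2, k3, k4, k5⟩ := key p hp hns
      have hsn := hn p.2 h3 h4
      refine (memY _).mpr ⟨le_rfl, hN, h3, h4, ?_⟩
      simp only [Seg.IsSeg] at hsn
      simp only [Seg.Prec, Seg.Linked, Seg.Sub, Seg.shift]
      omega
    have rel1 : ∀ p : ℤ × ℤ, p ∈ X →
        ¬((n p.2).b < (m 0).b ∨ ((n p.2).b = (m 0).b ∧ (n p.2).a < (m 0).a)) →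
        2 ≤ p.1 → (m (p.1 - 1)).a < (n p.2).a → (m p.1).Prec (m (p.1 - 1)) := by
      intro p hp hns h2' ha
      obtain ⟨h1, h2, h3, h4, h5⟩ := (memX p).mp hp
      obtain ⟨k1, k2, k3, k4, k5⟩ := key p hp hns
      have hl1 := hladder (p.1 - 1) p.1 (by omega) (by omega) h2
      simp only [Seg.Prec, Seg.Linked, Seg.Sub]
      omega
    have rel0 : ∀ p : ℤ × ℤ, p ∈ X →
        ¬((n p.2).b < (m 0).b ∨ ((n p.2).b = (m 0).b ∧ (n p.2).a < (m 0).a)) →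
        (m p.1).Prec (m 0) := by
      intro p hp hns
      obtain ⟨h1, h2, h3, h4, h5⟩ := (memX p).mp hp
      obtain ⟨k1, k2, k3, k4, k5⟩ := key p hp hns
      have hl := hladder 0 p.1 le_rfl (by omega) h2
      simp only [Seg.Prec, Seg.Linked, Seg.Sub]
      omega
    -- threshold uniqueness
    have thresh : ∀ p q : ℤ × ℤ, p ∈ X → q ∈ X →
        ¬((n p.2).b < (m 0).b ∨ ((n p.2).b = (m 0).b ∧ (n p.2).a < (m 0).a)) →
        ¬((n q.2).b < (m 0).b ∨ ((n q.2).b = (m 0).b ∧ (n q.2).a < (m 0).a)) →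
        p.2 = q.2 → ¬(2 ≤ q.1 ∧ (m (q.1 - 1)).a < (n q.2).a) → p.1 < q.1 → False := by
      intro p q hpX hqX hsp hsq he h2q hlt
      obtain ⟨kp1, kp2, kp3, kp4, kp5⟩ := key p hpX hsp
      obtain ⟨kq1, kq2, kq3, kq4, kq5⟩ := key q hqX hsq
      have h' : (n q.2).a ≤ (m (q.1 - 1)).a := by
        by_contra hc
        exact h2q ⟨by omega, by omega⟩
      rw [he] at kp4
      have hqN : q.1 < N := ((memX q).mp hqX).2.1
      rcases eq_or_lt_of_le (show p.1 ≤ q.1 - 1 by omega) with he1 | hlt2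
      · rw [he1] at kp4; omega
      · have hl := hladder p.1 (q.1 - 1) (by omega) hlt2 (by omega)
        omega
    refine ⟨fun p =>
      if h : ((n (p : ℤ × ℤ).2).b < (m 0).b ∨
          ((n (p : ℤ × ℤ).2).b = (m 0).b ∧ (n (p : ℤ × ℤ).2).a < (m 0).a)) then
        ⟨(↑(f ⟨↑p, memA' ↑p p.2 h⟩) : ℤ × ℤ), inclB _ ((f ⟨↑p, memA' ↑p p.2 h⟩).2)⟩
      else if h2 : (2 ≤ (p : ℤ × ℤ).1 ∧ (m ((p : ℤ × ℤ).1 - 1)).a < (n (p : ℤ × ℤ).2).a) then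
        ⟨((p : ℤ × ℤ).1 - 1, (p : ℤ × ℤ).2), memY1 ↑p p.2 h h2.1 h2.2⟩
      else ⟨((0 : ℤ), (p : ℤ × ℤ).2), memY0 ↑p p.2 h⟩, ?_, ?_⟩
    · -- injectivity
      intro p q hpq
      dsimp only at hpq
      by_cases hp : ((n (p : ℤ × ℤ).2).b < (m 0).b ∨
          ((n (p : ℤ × ℤ).2).b = (m 0).b ∧ (n (p : ℤ × ℤ).2).a < (m 0).a)) <;>
      by_cases hq : ((n (q : ℤ × ℤ).2).b < (m 0).b ∨
          ((n (q : ℤ × ℤ).2).b = (m 0).b ∧ (n (q : ℤ × ℤ).2).a < (m 0).a))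
      · rw [dif_pos hp, dif_pos hq] at hpq
        have h1 := Subtype.ext_iff.mp hpq
        have h3 := hinj (Subtype.ext h1)
        have h4 := Subtype.ext_iff.mp h3
        exact Subtype.ext h4
      · exfalso
        rw [dif_pos hp, dif_neg hq] at hpq
        have hS := ((memB _).mp ((f ⟨↑p, memA' ↑p p.2 hp⟩).2)).2.2.2.2.1
        have hv := Subtype.ext_iff.mp hpq
        by_cases h2q : (2 ≤ (q : ℤ × ℤ).1 ∧ (m ((q : ℤ × ℤ).1 - 1)).a < (n (q : ℤ × ℤ).2).a)
        · rw [dif_pos h2q] at hv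
          have h2a := congrArg Prod.snd hv
          have h2 : (↑(f ⟨↑p, memA' ↑p p.2 hp⟩) : ℤ × ℤ).2 = (q : ℤ × ℤ).2 := h2a
          rw [h2] at hS
          exact hq hS
        · rw [dif_neg h2q] at hv
          have h2a := congrArg Prod.snd hv
          have h2 : (↑(f ⟨↑p, memA' ↑p p.2 hp⟩) : ℤ × ℤ).2 = (q : ℤ × ℤ).2 := h2a
          rw [h2] at hS
          exact hq hS
      · exfalso
        rw [dif_neg hp, dif_pos hq] at hpq
        have hS := ((memB _).mp ((f ⟨↑q, memA' ↑q q.2 hq⟩).2)).2.2.2.2.1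
        have hv := Subtype.ext_iff.mp hpq
        by_cases h2p : (2 ≤ (p : ℤ × ℤ).1 ∧ (m ((p : ℤ × ℤ).1 - 1)).a < (n (p : ℤ × ℤ).2).a)
        · rw [dif_pos h2p] at hv
          have h2a := congrArg Prod.snd hv.symm
          have h2 : (↑(f ⟨↑q, memA' ↑q q.2 hq⟩) : ℤ × ℤ).2 = (p : ℤ × ℤ).2 := h2a
          rw [h2] at hS
          exact hp hS
        · rw [dif_neg h2p] at hv
          have h2a := congrArg Prod.snd hv.symm
          have h2 : (↑(f ⟨↑q, memA' ↑q q.2 hq⟩) : ℤ × ℤ).2 = (p : ℤ × ℤ).2 := h2a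
          rw [h2] at hS
          exact hp hS
      · rw [dif_neg hp, dif_neg hq] at hpq
        have hv := Subtype.ext_iff.mp hpq
        by_cases h2p : (2 ≤ (p : ℤ × ℤ).1 ∧ (m ((p : ℤ × ℤ).1 - 1)).a < (n (p : ℤ × ℤ).2).a) <;>
        by_cases h2q : (2 ≤ (q : ℤ × ℤ).1 ∧ (m ((q : ℤ × ℤ).1 - 1)).a < (n (q : ℤ × ℤ).2).a)
        · rw [dif_pos h2p, dif_pos h2q] at hv
          have e1a := congrArg Prod.fst hv
          have e2a := congrArg Prod.snd hv
          have e1 : (p : ℤ × ℤ).1 - 1 = (q : ℤ × ℤ).1 - 1 := e1a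
          have e2 : (p : ℤ × ℤ).2 = (q : ℤ × ℤ).2 := e2a
          exact Subtype.ext (Prod.ext_iff.mpr ⟨by omega, e2⟩)
        · rw [dif_pos h2p, dif_neg h2q] at hv
          have e1a := congrArg Prod.fst hv
          have e1 : (p : ℤ × ℤ).1 - 1 = 0 := e1a
          omega
        · rw [dif_neg h2p, dif_pos h2q] at hv
          have e1a := congrArg Prod.fst hv
          have e1 : (0 : ℤ) = (q : ℤ × ℤ).1 - 1 := e1a
          omega
        · rw [dif_neg h2p, dif_neg h2q] at hv
          have e2a := congrArg Prod.snd hv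
          have e2 : (p : ℤ × ℤ).2 = (q : ℤ × ℤ).2 := e2a
          have heq : (p : ℤ × ℤ).1 = (q : ℤ × ℤ).1 := by
            rcases lt_trichotomy (p : ℤ × ℤ).1 (q : ℤ × ℤ).1 with h | h | h
            · exact absurd (thresh ↑p ↑q p.2 q.2 hp hq e2 h2q h) not_false
            · exact h
            · exact absurd (thresh ↑q ↑p q.2 p.2 hq hp e2.symm h2p h) not_false
          exact Subtype.ext (Prod.ext_iff.mpr ⟨heq, e2⟩)
    · -- relation
      intro p
      dsimp only
      by_cases hp : ((n (p : ℤ × ℤ).2).b < (m 0).b ∨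
          ((n (p : ℤ × ℤ).2).b = (m 0).b ∧ (n (p : ℤ × ℤ).2).a < (m 0).a))
      · rw [dif_pos hp]
        exact hf ⟨↑p, memA' ↑p p.2 hp⟩
      · rw [dif_neg hp]
        by_cases h2p : (2 ≤ (p : ℤ × ℤ).1 ∧ (m ((p : ℤ × ℤ).1 - 1)).a < (n (p : ℤ × ℤ).2).a)
        · rw [dif_pos h2p]
          exact Or.inr ⟨rfl, rel1 ↑p p.2 hp h2p.1 h2p.2⟩
        · rw [dif_neg h2p]
          exact Or.inr ⟨rfl, rel0 ↑p p.2 hp⟩
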